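/- arXiv:2312.03487 — 7 statements merged into one kernel-verified Lean document; each statement's English description precedes it below -/
import Mathlib

section
/- Well-stitchedness of 3D Minkowski spacetime (Theorem 1): Let P₁, P₂, P₃, P₄, P₅, P₆, a, b, c, d, e, f be twelve pairwise distinct points of V satisfying the 23 stitching relations. Then f ⌣ P₆, i.e. q(f − P₆) = 0. -/
noncomputable section

/-- Minkowski quadratic form on `ℝ³` with coordinates `(t, x, y)` indexed `0, 1, 2`. -/
def q (v : Fin 3 → ℝ) : ℝ := -(v 0)^2 + (v 1)^2 + (v 2)^2

/-- Polar bilinear form of `q`. -/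
def mbil (v w : Fin 3 → ℝ) : ℝ := -(v 0) * (w 0) + (v 1) * (w 1) + (v 2) * (w 2)

/-- The 23 stitching relations among twelve points. -/
def Stitch (P₁ P₂ P₃ P₄ P₅ P₆ a b c d e f : Fin 3 → ℝ) : Prop :=
  q (a - P₁) = 0 ∧ q (a - P₂) = 0 ∧ q (a - P₃) = 0 ∧ q (a - P₄) = 0 ∧
  q (b - P₁) = 0 ∧ q (b - P₂) = 0 ∧ q (b - P₃) = 0 ∧ q (b - P₄) = 0 ∧
  q (c - P₁) = 0 ∧ q (c - P₂) = 0 ∧ q (c - P₅) = 0 ∧ q (c - P₆) = 0 ∧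
  q (d - P₁) = 0 ∧ q (d - P₂) = 0 ∧ q (d - P₅) = 0 ∧ q (d - P₆) = 0 ∧
  q (e - P₃) = 0 ∧ q (e - P₄) = 0 ∧ q (e - P₅) = 0 ∧ q (e - P₆) = 0 ∧
  q (f - P₃) = 0 ∧ q (f - P₄) = 0 ∧ q (f - P₅) = 0

/-!
Lift a point `v` to `(v, 1, q v) ∈ ℝ⁵`. For the signature `(3, 2)` form `ambientForm` the lifts
are null and `ambientForm (nullLift v) (nullLift w) = -q (v - w)`, so lightlike separation becomes
orthogonality. As the form is nondegenerate on a space of dimension 5, two mutually orthogonal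
independent families have at most 5 members together, and a totally isotropic subspace has
dimension at most 2: a point lightlike to two lightlike-separated points lies on the null line
through them.

If `P₁ ⌣ P₂`, the lifts of `a, b, c, d`, hence of `P₃, P₄, P₆`, all lie in the isotropic plane `L`
spanned by the lifts of `P₁, P₂`, and `f`, being lightlike to `P₃` and `P₄`, is orthogonal to all of
`L`. Otherwise the lifts of `P₃, P₁, P₂` are independent, so `nullLift P₄ = β • nullLift P₃ + k` and
`nullLift P₆ = γ • nullLift P₅ + k'` with `k, k' ∈ L`. Now `f ⊥ k`, which gives `f ⊥ k'` unless
`k, k'` span `L`; but then `e ⊥ L`, so the three points `a, b, e` are lightlike to `P₁, P₂, P₃`,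
and this forces `P₁ ⌣ P₂`.
-/

open Module Submodule

namespace LinearMap.BilinForm

variable {K V : Type*} [Field K] [AddCommGroup V] [Module K V] [FiniteDimensional K V]
  {B : LinearMap.BilinForm K V} {ι κ : Type*} [Fintype ι] [Fintype κ]

theorem card_add_card_le_finrank (hB : B.Nondegenerate) {u : ι → V} {v : κ → V}
    (hu : LinearIndependent K u) (hv : LinearIndependent K v) (huv : ∀ i j, B (u i) (v j) = 0) :
    Fintype.card ι + Fintype.card κ ≤ finrank K V := by
  have hle : span K (Set.range v) ≤ B.orthogonal (span K (Set.range u)) := by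
    rw [span_le, Set.range_subset_iff]
    intro j x hx
    exact LinearMap.eqOn_span (f := B.flip (v j)) (g := 0) (by rintro _ ⟨i, rfl⟩; exact huv i j) hx
  have hι : Fintype.card ι ≤ finrank K V := hu.fintype_card_le_finrank
  have := finrank_mono hle
  rw [finrank_span_eq_card hv, finrank_orthogonal hB, finrank_span_eq_card hu] at this
  omega

theorem mem_span_range_of_forall_apply_eq_zero (hB : B.Nondegenerate) {u : ι → V} {w : κ → V}
    (hu : LinearIndependent K u) (hw : LinearIndependent K w)
    (hcard : finrank K V ≤ Fintype.card ι + Fintype.card κ) (huw : ∀ i j, B (u i) (w j) = 0)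
    {x : V} (hx : ∀ i, B (u i) x = 0) : x ∈ span K (Set.range w) := by
  by_contra hxw
  have := card_add_card_le_finrank hB hu (hw.option hxw) (fun i o => by cases o <;> simp [hx, huw])
  rw [Fintype.card_option] at this
  omega

theorem mem_span_range_of_isotropic (hB : B.Nondegenerate) (hB' : B.IsRefl) {w : κ → V}
    (hw : LinearIndependent K w) (hcard : finrank K V < 2 * (Fintype.card κ + 1))
    (hww : ∀ i j, B (w i) (w j) = 0) {x : V} (hxx : B x x = 0) (hx : ∀ i, B (w i) x = 0) :
    x ∈ span K (Set.range w) := by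
  by_contra hxw
  have := card_add_card_le_finrank hB (hw.option hxw) (hw.option hxw)
    (fun o o' => by cases o <;> cases o' <;> simp [hxx, hx, hww, hB' _ _ (hx _)])
  rw [Fintype.card_option] at this
  omega

end LinearMap.BilinForm

theorem Submodule.span_pair_eq_of_mem {K V : Type*} [Field K] [AddCommGroup V] [Module K V]
    {u v x y : V} (huv : LinearIndependent K ![u, v]) (hu : u ∈ span K {x, y})
    (hv : v ∈ span K {x, y}) : span K {u, v} = span K {x, y} := by
  have := FiniteDimensional.span_of_finite K (Set.toFinite {x, y})
  refine eq_of_le_of_finrank_le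
    (span_le.2 (Set.insert_subset hu (Set.singleton_subset_iff.2 hv))) ?_
  have hxy := finrank_range_le_card (R := K) ![x, y]
  have huv := finrank_span_eq_card huv
  rw [Matrix.range_cons_cons_empty] at hxy huv
  rw [huv]; exact hxy

local notation:50 P:51 " ⌣ " Q:51 => q (P - Q) = 0

theorem q_sub_comm (v w : Fin 3 → ℝ) : q (v - w) = q (w - v) := by
  simp only [q, Pi.sub_apply]; ring

theorem lightlike_symm {v w : Fin 3 → ℝ} (h : v ⌣ w) : w ⌣ v := q_sub_comm w v ▸ h

def nullLift (v : Fin 3 → ℝ) : Fin 5 → ℝ := ![v 0, v 1, v 2, 1, q v]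

def ambientForm : LinearMap.BilinForm ℝ (Fin 5 → ℝ) :=
  LinearMap.mk₂ ℝ
    (fun x y => -2 * x 0 * y 0 + 2 * x 1 * y 1 + 2 * x 2 * y 2 - x 3 * y 4 - x 4 * y 3)
    (by intros; simp only [Pi.add_apply]; ring)
    (by intros; simp only [Pi.smul_apply, smul_eq_mul]; ring)
    (by intros; simp only [Pi.add_apply]; ring)
    (by intros; simp only [Pi.smul_apply, smul_eq_mul]; ring)

theorem ambientForm_apply (x y : Fin 5 → ℝ) :
    ambientForm x y = -2 * x 0 * y 0 + 2 * x 1 * y 1 + 2 * x 2 * y 2 - x 3 * y 4 - x 4 * y 3 :=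
  rfl

theorem ambientForm_isRefl : ambientForm.IsRefl := fun x y h => by
  rw [ambientForm_apply] at h ⊢; linarith

theorem ambientForm_nondegenerate : ambientForm.Nondegenerate := by
  refine (LinearMap.IsRefl.nondegenerate_iff_separatingLeft ambientForm_isRefl).2 fun x hx => ?_
  ext i; fin_cases i
  · simpa [ambientForm_apply] using hx (Pi.single 0 1)
  · simpa [ambientForm_apply] using hx (Pi.single 1 1)
  · simpa [ambientForm_apply] using hx (Pi.single 2 1)
  · simpa [ambientForm_apply] using hx (Pi.single 4 1)
  · simpa [ambientForm_apply] using hx (Pi.single 3 1)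

theorem ambientForm_nullLift (v w : Fin 3 → ℝ) :
    ambientForm (nullLift v) (nullLift w) = -q (v - w) := by
  simp only [ambientForm_apply, nullLift, q, Matrix.cons_val_zero, Matrix.cons_val_one,
    Matrix.cons_val, Pi.sub_apply]
  ring

theorem ambientForm_nullLift_eq_zero_iff {v w : Fin 3 → ℝ} :
    ambientForm (nullLift v) (nullLift w) = 0 ↔ v ⌣ w := by
  rw [ambientForm_nullLift, neg_eq_zero]

theorem nullLift_ne_zero (v : Fin 3 → ℝ) : nullLift v ≠ 0 :=
  fun h => by simpa [nullLift] using congrFun h 3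

theorem nullLift_injective : Function.Injective nullLift := fun v w h => by
  ext i; fin_cases i
  exacts [congrFun h 0, congrFun h 1, congrFun h 2]

theorem linearIndependent_nullLift_pair {v w : Fin 3 → ℝ} (h : v ≠ w) :
    LinearIndependent ℝ ![nullLift v, nullLift w] := by
  refine (LinearIndependent.pair_iff' (nullLift_ne_zero v)).2 fun c hc => h (nullLift_injective ?_)
  have hc1 : c = 1 := by simpa [nullLift] using congrFun hc 3
  rwa [hc1, one_smul] at hc

theorem ambientForm_nullLift_self (v : Fin 3 → ℝ) : ambientForm (nullLift v) (nullLift v) = 0 := by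
  simp [ambientForm_nullLift, q]

theorem lightlike_of_nullLift_mem_span {x y z : Fin 3 → ℝ} (hzx : z ≠ x) (hzy : z ≠ y)
    (hz : nullLift z ∈ span ℝ {nullLift x, nullLift y}) : x ⌣ y := by
  obtain ⟨s, t, hst⟩ := mem_span_pair.1 hz
  have hsum : s + t = 1 := by simpa [nullLift] using congrFun hst 3
  have hs : s ≠ 0 := by
    rintro rfl
    exact hzy (nullLift_injective (by simpa [show t = 1 by linarith] using hst.symm))
  have ht : t ≠ 0 := by
    rintro rfl
    exact hzx (nullLift_injective (by simpa [show s = 1 by linarith] using hst.symm))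
  have hnull := ambientForm_nullLift_self z
  rw [← hst] at hnull
  simp only [map_add, map_smul, LinearMap.add_apply, LinearMap.smul_apply, smul_eq_mul,
    ambientForm_nullLift_self, ambientForm_nullLift, q_sub_comm y x] at hnull
  have : s * t * q (x - y) = 0 := by linear_combination -hnull / 2
  simpa [hs, ht] using this

theorem linearIndependent_nullLift_triple {x y z : Fin 3 → ℝ} (hxy : x ≠ y) (hzx : z ≠ x)
    (hzy : z ≠ y) (h : ¬ x ⌣ y) : LinearIndependent ℝ ![nullLift z, nullLift x, nullLift y] :=
  linearIndependent_finCons.2 ⟨linearIndependent_nullLift_pair hxy, fun hz =>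
    h (lightlike_of_nullLift_mem_span hzx hzy (by rwa [Matrix.range_cons_cons_empty] at hz))⟩

theorem nullLift_mem_span_of_lightlike {x y z : Fin 3 → ℝ} (hxy : x ≠ y) (h : x ⌣ y)
    (hzx : z ⌣ x) (hzy : z ⌣ y) : nullLift z ∈ span ℝ {nullLift x, nullLift y} := by
  rw [← Matrix.range_cons_cons_empty _ _ ![]]
  refine LinearMap.BilinForm.mem_span_range_of_isotropic ambientForm_nondegenerate
    ambientForm_isRefl (linearIndependent_nullLift_pair hxy) (by simp) ?_
    (ambientForm_nullLift_self z) ?_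
  · simp [Fin.forall_fin_two, ambientForm_nullLift_self, ambientForm_nullLift, h, lightlike_symm h]
  · simp [Fin.forall_fin_two, ambientForm_nullLift, lightlike_symm hzx, lightlike_symm hzy]

theorem lightlike_of_mem_span {w x y z : Fin 3 → ℝ}
    (hz : nullLift z ∈ span ℝ {nullLift x, nullLift y}) (hx : w ⌣ x) (hy : w ⌣ y) : w ⌣ z := by
  rw [← ambientForm_nullLift_eq_zero_iff] at hx hy ⊢
  exact LinearMap.eqOn_span (f := ambientForm (nullLift w)) (g := 0)
    (by rintro _ (rfl | rfl) <;> assumption) hz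

theorem nullLift_mem_span_triple {u v P₁ P₂ P₃ P₄ : Fin 3 → ℝ} (huv : u ≠ v) (h₁₂ : P₁ ≠ P₂)
    (h₃₁ : P₃ ≠ P₁) (h₃₂ : P₃ ≠ P₂) (h : ¬ P₁ ⌣ P₂) (hu₁ : u ⌣ P₁) (hu₂ : u ⌣ P₂) (hu₃ : u ⌣ P₃)
    (hu₄ : u ⌣ P₄) (hv₁ : v ⌣ P₁) (hv₂ : v ⌣ P₂) (hv₃ : v ⌣ P₃) (hv₄ : v ⌣ P₄) :
    nullLift P₄ ∈ span ℝ {nullLift P₃, nullLift P₁, nullLift P₂} := by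
  have := LinearMap.BilinForm.mem_span_range_of_forall_apply_eq_zero ambientForm_nondegenerate
    (linearIndependent_nullLift_pair huv) (linearIndependent_nullLift_triple h₁₂ h₃₁ h₃₂ h)
    (by simp) (by simp [Fin.forall_fin_succ, ambientForm_nullLift, *])
    (x := nullLift P₄) (by simp [Fin.forall_fin_two, ambientForm_nullLift, *])
  rwa [Matrix.range_cons, Matrix.range_cons_cons_empty, Set.singleton_union] at this

theorem lightlike_of_common_lightlike {a b e P₁ P₂ P₃ : Fin 3 → ℝ} (h₁₂ : P₁ ≠ P₂)
    (h₃₁ : P₃ ≠ P₁) (h₃₂ : P₃ ≠ P₂) (hab : a ≠ b) (hea : e ≠ a) (heb : e ≠ b)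
    (ha₁ : a ⌣ P₁) (ha₂ : a ⌣ P₂) (ha₃ : a ⌣ P₃) (hb₁ : b ⌣ P₁) (hb₂ : b ⌣ P₂) (hb₃ : b ⌣ P₃)
    (he₁ : e ⌣ P₁) (he₂ : e ⌣ P₂) (he₃ : e ⌣ P₃) : P₁ ⌣ P₂ := by
  by_contra h
  have he : nullLift e ∈ span ℝ {nullLift a, nullLift b} := by
    have := LinearMap.BilinForm.mem_span_range_of_forall_apply_eq_zero ambientForm_nondegenerate
      (linearIndependent_nullLift_triple h₁₂ h₃₁ h₃₂ h) (linearIndependent_nullLift_pair hab)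
      (by simp)
      (by simp [Fin.forall_fin_succ, ambientForm_nullLift, q_sub_comm _ a, q_sub_comm _ b, *])
      (x := nullLift e) (by simp [Fin.forall_fin_succ, ambientForm_nullLift, q_sub_comm _ e, *])
    rwa [Matrix.range_cons_cons_empty] at this
  have hab' : a ⌣ b := lightlike_of_nullLift_mem_span hea heb he
  exact h (lightlike_symm (lightlike_of_mem_span
    (nullLift_mem_span_of_lightlike hab hab' (lightlike_symm ha₁) (lightlike_symm hb₁))
    (lightlike_symm ha₂) (lightlike_symm hb₂)))

theorem Stitch.lightlike_of_lightlike {P₁ P₂ P₃ P₄ P₅ P₆ a b c d e f : Fin 3 → ℝ}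
    (hst : Stitch P₁ P₂ P₃ P₄ P₅ P₆ a b c d e f) (h₁₂ : P₁ ≠ P₂) (h₃₄ : P₃ ≠ P₄) (hab : a ≠ b)
    (hcd : c ≠ d) (h : P₁ ⌣ P₂) : f ⌣ P₆ := by
  obtain ⟨ha₁, ha₂, ha₃, ha₄, hb₁, hb₂, hb₃, hb₄, hc₁, hc₂, -, hc₆, hd₁, hd₂, -, hd₆,
    -, -, -, -, hf₃, hf₄, -⟩ := hst
  set L := span ℝ {nullLift P₁, nullLift P₂}
  have mem_L : ∀ {z}, z ⌣ P₁ → z ⌣ P₂ → nullLift z ∈ L := nullLift_mem_span_of_lightlike h₁₂ h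
  have mem_L' : ∀ {x y z}, span ℝ {nullLift x, nullLift y} = L → z ⌣ x → z ⌣ y →
      nullLift z ∈ L := fun hxy hx hy =>
    mem_L (lightlike_of_mem_span (hxy ▸ subset_span (Set.mem_insert _ _)) hx hy)
      (lightlike_of_mem_span (hxy ▸ subset_span (Set.mem_insert_of_mem _ rfl)) hx hy)
  have hL_ab : span ℝ {nullLift a, nullLift b} = L :=
    span_pair_eq_of_mem (linearIndependent_nullLift_pair hab) (mem_L ha₁ ha₂) (mem_L hb₁ hb₂)
  have hL_cd : span ℝ {nullLift c, nullLift d} = L :=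
    span_pair_eq_of_mem (linearIndependent_nullLift_pair hcd) (mem_L hc₁ hc₂) (mem_L hd₁ hd₂)
  have hL_34 : span ℝ {nullLift P₃, nullLift P₄} = L :=
    span_pair_eq_of_mem (linearIndependent_nullLift_pair h₃₄)
      (mem_L' hL_ab (lightlike_symm ha₃) (lightlike_symm hb₃))
      (mem_L' hL_ab (lightlike_symm ha₄) (lightlike_symm hb₄))
  exact lightlike_of_mem_span (hL_34 ▸ mem_L' hL_cd (lightlike_symm hc₆) (lightlike_symm hd₆))
    hf₃ hf₄

theorem Stitch.lightlike_of_not_lightlike {P₁ P₂ P₃ P₄ P₅ P₆ a b c d e f : Fin 3 → ℝ}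
    (hst : Stitch P₁ P₂ P₃ P₄ P₅ P₆ a b c d e f) (h₁₂ : P₁ ≠ P₂) (h₃₁ : P₃ ≠ P₁) (h₃₂ : P₃ ≠ P₂)
    (h₃₄ : P₃ ≠ P₄) (h₅₁ : P₅ ≠ P₁) (h₅₂ : P₅ ≠ P₂) (hab : a ≠ b) (hcd : c ≠ d) (hea : e ≠ a)
    (heb : e ≠ b) (h : ¬ P₁ ⌣ P₂) : f ⌣ P₆ := by
  obtain ⟨ha₁, ha₂, ha₃, ha₄, hb₁, hb₂, hb₃, hb₄, hc₁, hc₂, hc₅, hc₆, hd₁, hd₂, hd₅, hd₆,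
    he₃, he₄, he₅, he₆, hf₃, hf₄, hf₅⟩ := hst
  set L := span ℝ {nullLift P₁, nullLift P₂}
  obtain ⟨β, k, hk, hP₄⟩ := mem_span_insert.1 <|
    nullLift_mem_span_triple hab h₁₂ h₃₁ h₃₂ h ha₁ ha₂ ha₃ ha₄ hb₁ hb₂ hb₃ hb₄
  obtain ⟨γ, k', hk', hP₆⟩ := mem_span_insert.1 <|
    nullLift_mem_span_triple hcd h₁₂ h₅₁ h₅₂ h hc₁ hc₂ hc₅ hc₆ hd₁ hd₂ hd₅ hd₆
  have hk_eq : k = nullLift P₄ - β • nullLift P₃ := eq_sub_of_add_eq' hP₄.symm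
  have hk'_eq : k' = nullLift P₆ - γ • nullLift P₅ := eq_sub_of_add_eq' hP₆.symm
  have hek : ambientForm (nullLift e) k = 0 := by simp [hk_eq, ambientForm_nullLift, he₃, he₄]
  have hfk : ambientForm (nullLift f) k = 0 := by simp [hk_eq, ambientForm_nullLift, hf₃, hf₄]
  have hek' : ambientForm (nullLift e) k' = 0 := by simp [hk'_eq, ambientForm_nullLift, he₅, he₆]
  have hk₀ : k ≠ 0 := by
    rintro rfl
    exact (LinearIndependent.pair_iff' (nullLift_ne_zero P₃)).1
      (linearIndependent_nullLift_pair h₃₄) β (by simpa using hP₄.symm)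
  suffices ambientForm (nullLift f) k' = 0 by
    rw [← ambientForm_nullLift_eq_zero_iff, hP₆]; simp [ambientForm_nullLift, hf₅, this]
  by_cases hkk' : k' ∈ span ℝ {k}
  · obtain ⟨c, rfl⟩ := mem_span_singleton.1 hkk'
    simp [hfk]
  · have hL : span ℝ {k, k'} = L := span_pair_eq_of_mem
      ((LinearIndependent.pair_iff' hk₀).2 fun c hc => hkk' (mem_span_singleton.2 ⟨c, hc⟩)) hk hk'
    have heL : ∀ x ∈ L, ambientForm (nullLift e) x = 0 := fun x hx =>
      LinearMap.eqOn_span (g := 0) (by rintro _ (rfl | rfl) <;> assumption) (hL ▸ hx)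
    have he₁ : e ⌣ P₁ :=
      ambientForm_nullLift_eq_zero_iff.1 (heL _ (subset_span (Set.mem_insert _ _)))
    have he₂ : e ⌣ P₂ :=
      ambientForm_nullLift_eq_zero_iff.1 (heL _ (subset_span (Set.mem_insert_of_mem _ rfl)))
    exact absurd (lightlike_of_common_lightlike h₁₂ h₃₁ h₃₂ hab hea heb ha₁ ha₂ ha₃ hb₁ hb₂ hb₃
      he₁ he₂ he₃) h

/-- Theorem 1: the 3D Minkowski spacetime is well-stitched. -/
theorem minkowski3_well_stitched
    (P₁ P₂ P₃ P₄ P₅ P₆ a b c d e f : Fin 3 → ℝ)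
    (hdist : List.Pairwise (· ≠ ·) [P₁, P₂, P₃, P₄, P₅, P₆, a, b, c, d, e, f])
    (hst : Stitch P₁ P₂ P₃ P₄ P₅ P₆ a b c d e f) :
    q (f - P₆) = 0 := by
  simp only [List.pairwise_cons, List.mem_cons, List.not_mem_nil, or_false, forall_eq_or_imp,
    forall_eq, IsEmpty.forall_iff, implies_true, and_true, List.Pairwise.nil] at hdist
  obtain ⟨⟨h₁₂, h₁₃, -, h₁₅, -⟩, ⟨h₂₃, -, h₂₅, -⟩, ⟨h₃₄, -⟩, -, -, -, ⟨hab, -, -, hae, -⟩,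
    ⟨-, -, hbe, -⟩, ⟨hcd, -⟩, -⟩ := hdist
  by_cases h : P₁ ⌣ P₂
  · exact hst.lightlike_of_lightlike h₁₂ h₃₄ hab hcd h
  · exact hst.lightlike_of_not_lightlike h₁₂ h₁₃.symm h₂₃.symm h₃₄ h₁₅.symm h₂₅.symm hab hcd
      hae.symm hbe.symm h
end
end

section
/- Coplanarity lemma (Lemma 1): Let a, b, P₁, P₂, P₃, P₄ ∈ V with a ≠ b, and suppose q(Pᵢ − a) = 0 and q(Pᵢ − b) = 0 for each i = 1, 2, 3, 4. Then the four points P₁, P₂, P₃, P₄ lie in a common affine plane; equivalently, the vectors P₂ − P₁, P₃ − P₁ and P₄ − P₁ are linearly dependent. -/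
noncomputable section

/-- The functional `v ↦ mbil v w` as a linear map. -/
def mfun (w : Fin 3 → ℝ) : (Fin 3 → ℝ) →ₗ[ℝ] ℝ :=
  (-(w 0)) • LinearMap.proj 0 + (w 1) • LinearMap.proj 1 + (w 2) • LinearMap.proj 2

lemma mfun_apply (w v : Fin 3 → ℝ) : mfun w v = mbil v w := by
  simp [mfun, mbil]; ring

lemma mfun_ne_zero (w : Fin 3 → ℝ) (hw : w ≠ 0) : mfun w ≠ 0 := by
  intro h0
  apply hw
  have h0' : mfun w ![-(w 0), w 1, w 2] = 0 := by rw [h0]; rfl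
  rw [mfun_apply] at h0'
  simp [mbil] at h0'
  have e0 : w 0 = 0 := by nlinarith [sq_nonneg (w 0), sq_nonneg (w 1), sq_nonneg (w 2)]
  have e1 : w 1 = 0 := by nlinarith [sq_nonneg (w 0), sq_nonneg (w 1), sq_nonneg (w 2)]
  have e2 : w 2 = 0 := by nlinarith [sq_nonneg (w 0), sq_nonneg (w 1), sq_nonneg (w 2)]
  funext i
  fin_cases i
  · exact e0
  · exact e1
  · exact e2

lemma cone_diff (a b P Q : Fin 3 → ℝ)
    (hPa : q (P - a) = 0) (hPb : q (P - b) = 0)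
    (hQa : q (Q - a) = 0) (hQb : q (Q - b) = 0) :
    mfun (b - a) (P - Q) = 0 := by
  rw [mfun_apply]
  simp only [q, mbil, Pi.sub_apply] at *
  nlinarith [hPa, hPb, hQa, hQb]

/-- Lemma 1: points on the intersection of two light cones with distinct vertices
are coplanar. -/
theorem coplanarity_lemma
    (a b P₁ P₂ P₃ P₄ : Fin 3 → ℝ) (hab : a ≠ b)
    (h1a : q (P₁ - a) = 0) (h1b : q (P₁ - b) = 0)
    (h2a : q (P₂ - a) = 0) (h2b : q (P₂ - b) = 0)
    (h3a : q (P₃ - a) = 0) (h3b : q (P₃ - b) = 0)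
    (h4a : q (P₄ - a) = 0) (h4b : q (P₄ - b) = 0) :
    ¬ LinearIndependent ℝ ![P₂ - P₁, P₃ - P₁, P₄ - P₁] := by
  intro hli
  have hwne : b - a ≠ 0 := sub_ne_zero.mpr (Ne.symm hab)
  have hfne : mfun (b - a) ≠ 0 := mfun_ne_zero _ hwne
  have h2 := cone_diff a b P₂ P₁ h2a h2b h1a h1b
  have h3 := cone_diff a b P₃ P₁ h3a h3b h1a h1b
  have h4 := cone_diff a b P₄ P₁ h4a h4b h1a h1b
  set f := mfun (b - a) with hf
  have hker : ∀ i : Fin 3, (![P₂ - P₁, P₃ - P₁, P₄ - P₁]) i ∈ LinearMap.ker f := by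
    intro i
    fin_cases i
    · exact h2
    · exact h3
    · exact h4
  have hli' : LinearIndependent ℝ
      (fun i => (⟨(![P₂ - P₁, P₃ - P₁, P₄ - P₁]) i, hker i⟩ : LinearMap.ker f)) :=
    hli.of_comp (LinearMap.ker f).subtype
  have hcard := hli'.fintype_card_le_finrank
  have hrange : Module.finrank ℝ (LinearMap.range f) = 1 := by
    rw [LinearMap.range_eq_top.mpr (LinearMap.surjective_of_ne_zero hfne)]
    simp
  have hsum := LinearMap.finrank_range_add_finrank_ker f
  have hdim : Module.finrank ℝ (Fin 3 → ℝ) = 3 := by simp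
  rw [hrange, hdim] at hsum
  simp at hcard
  omega
end
end

section
/- Lightlike-separated vertices lemma: Let A, B ∈ V with A ≠ B and q(A − B) = 0. If a point P ∈ V satisfies q(P − A) = 0 and q(P − B) = 0, then P lies on the line through A and B, i.e. there exists s ∈ ℝ with P = A + s • (B − A). (The intersection of two light cones whose vertices are distinct and lightlike-separated is the line joining the vertices.) -/
noncomputable section

/-!
Put `u = B - A` and `v = P - A`. Since `P - B = v - u`, polarization turns the three null
conditions into `⟨v, u⟩ = 0`. Two orthogonal null vectors are parallel: by Lagrange's identity
`(v₁u₂ - v₂u₁)² = (v₁² + v₂²)(u₁² + u₂²) - (v₁u₁ + v₂u₂)² = v₀²u₀² - (v₀u₀)² = 0`, so their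
spatial parts are parallel, and a nonzero null vector has `u₀ ≠ 0`, which fixes the factor
`v₀ / u₀`.
-/

theorem q_neg (v : Fin 3 → ℝ) : q (-v) = q v := by
  simp only [q, Pi.neg_apply, neg_sq]

theorem q_sub (v w : Fin 3 → ℝ) : q (v - w) = q v + q w - 2 * mbil v w := by
  simp only [q, mbil, Pi.sub_apply]
  ring

theorem mbil_eq_zero_of_q_sub_eq_zero {v w : Fin 3 → ℝ} (hv : q v = 0) (hw : q w = 0)
    (hvw : q (v - w) = 0) : mbil v w = 0 := by
  rw [q_sub, hv, hw] at hvw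
  linarith

theorem eq_zero_of_q_eq_zero_of_apply_zero {v : Fin 3 → ℝ} (hv : q v = 0) (h0 : v 0 = 0) :
    v = 0 := by
  simp only [q, h0] at hv
  have h1 : v 1 = 0 := by nlinarith [sq_nonneg (v 1), sq_nonneg (v 2)]
  have h2 : v 2 = 0 := by nlinarith [sq_nonneg (v 1), sq_nonneg (v 2)]
  ext i
  fin_cases i <;> assumption

theorem spatial_cross_eq_zero {u v : Fin 3 → ℝ} (hu : q u = 0) (hv : q v = 0)
    (huv : mbil v u = 0) : v 1 * u 2 - v 2 * u 1 = 0 := by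
  simp only [q, mbil] at *
  linear_combination (exp := 2) (u 1 ^ 2 + u 2 ^ 2) * hv + v 0 ^ 2 * hu
    - (v 0 * u 0 + v 1 * u 1 + v 2 * u 2) * huv

theorem exists_eq_smul_of_q_eq_zero_of_mbil_eq_zero {u v : Fin 3 → ℝ} (hu : q u = 0)
    (hu0 : u ≠ 0) (hv : q v = 0) (huv : mbil v u = 0) : ∃ s : ℝ, v = s • u := by
  have ht : u 0 ≠ 0 := fun h => hu0 (eq_zero_of_q_eq_zero_of_apply_zero hu h)
  have hx := spatial_cross_eq_zero hu hv huv
  simp only [q] at hu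
  simp only [mbil] at huv
  have h1 : v 1 * u 0 = v 0 * u 1 := mul_left_cancel₀ ht <| by
    linear_combination -v 1 * hu + u 1 * huv + u 2 * hx
  have h2 : v 2 * u 0 = v 0 * u 2 := mul_left_cancel₀ ht <| by
    linear_combination -v 2 * hu + u 2 * huv - u 1 * hx
  refine ⟨v 0 / u 0, funext fun i => ?_⟩
  fin_cases i <;> simp only [Pi.smul_apply, smul_eq_mul] <;> field_simp
  exacts [rfl, h1, h2]

/-- The intersection of two light cones with distinct lightlike-separated vertices
is the line joining the vertices. -/
theorem lightlike_vertices_line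
    (A B P : Fin 3 → ℝ) (hAB : A ≠ B) (hq : q (A - B) = 0)
    (hPA : q (P - A) = 0) (hPB : q (P - B) = 0) :
    ∃ s : ℝ, P = A + s • (B - A) := by
  have hBA : q (B - A) = 0 := by rwa [← neg_sub, q_neg]
  have horth : mbil (P - A) (B - A) = 0 :=
    mbil_eq_zero_of_q_sub_eq_zero hPA hBA (by rwa [sub_sub_sub_cancel_right])
  obtain ⟨s, hs⟩ := exists_eq_smul_of_q_eq_zero_of_mbil_eq_zero hBA
    (sub_ne_zero.mpr hAB.symm) hPA horth
  exact ⟨s, sub_eq_iff_eq_add'.mp hs⟩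
end
end

section
/- Case B of the proof of Theorem 1: Let P₁, P₂, P₃, P₄, P₅, P₆, a, b, c, d, e, f be twelve pairwise distinct points of V satisfying the 23 stitching relations. Suppose the directions P₂ − P₁ and P₄ − P₃ are both timelike, i.e. q(P₂ − P₁) < 0 and q(P₄ − P₃) < 0, and are parallel, i.e. P₄ − P₃ = κ • (P₂ − P₁) for some κ ∈ ℝ. Then q(f − P₆) = 0. -/
/-! Points lightlike to both `P₁` and `P₂` lie on a hyperplane orthogonal to the timelike
`u = P₂ - P₁`, and likewise for `P₃, P₄`; since the two directions are parallel and `a` lies on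
both hyperplanes, they coincide, so `c, d, e, f` lie in one spacelike plane. The light cones of
`P₅` and `P₆` cut that plane in circles sharing the three points `c, d, e`, which forces
`P₆ - P₅` to be a multiple of `u`: otherwise `d - c` and `e - c` would lie on one line, which
meets a light cone at most twice. Hence `x ↦ q (x - P₆) - q (x - P₅)` is constant on the plane,
and it vanishes at `c`. -/

noncomputable section

lemma mbil_comm (v w : Fin 3 → ℝ) : mbil v w = mbil w v := by
  simp only [mbil]; ring

lemma mbil_self (v : Fin 3 → ℝ) : mbil v v = q v := by
  simp only [mbil, q]; ring

lemma mbil_sub_left (v w z : Fin 3 → ℝ) : mbil (v - w) z = mbil v z - mbil w z := by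
  simp only [mbil, Pi.sub_apply]; ring

lemma mbil_sub_right (v w z : Fin 3 → ℝ) : mbil v (w - z) = mbil v w - mbil v z := by
  simp only [mbil, Pi.sub_apply]; ring

lemma mbil_smul_right (r : ℝ) (v w : Fin 3 → ℝ) : mbil v (r • w) = r * mbil v w := by
  simp only [mbil, Pi.smul_apply, smul_eq_mul]; ring

lemma q_add_smul (x n : Fin 3 → ℝ) (t : ℝ) :
    q (x + t • n) = q x + 2 * t * mbil n x + t ^ 2 * q n := by
  simp only [q, mbil, Pi.add_apply, Pi.smul_apply, smul_eq_mul]; ring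

lemma q_sub_sub_q_sub (x y P Q : Fin 3 → ℝ) :
    q (y - Q) - q (x - Q) = q (y - P) - q (x - P) - 2 * (mbil y (Q - P) - mbil x (Q - P)) := by
  simp only [q, mbil, Pi.sub_apply]; ring

lemma mbil_eq_of_lightlike {x y P Q : Fin 3 → ℝ} (hxP : q (x - P) = 0) (hxQ : q (x - Q) = 0)
    (hyP : q (y - P) = 0) (hyQ : q (y - Q) = 0) : mbil y (Q - P) = mbil x (Q - P) := by
  linarith [q_sub_sub_q_sub x y P Q]

lemma q_pos_of_mbil_eq_zero {u z : Fin 3 → ℝ} (hu : q u < 0) (h : mbil u z = 0) (hz : z ≠ 0) :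
    0 < q z := by
  have lagrange : u 0 ^ 2 * q z = -q u * (z 1 ^ 2 + z 2 ^ 2) + (u 1 * z 2 - u 2 * z 1) ^ 2 := by
    simp only [q, mbil] at h ⊢
    linear_combination (u 0 * z 0 + u 1 * z 1 + u 2 * z 2) * h
  by_contra! hqz
  have hz12 : z 1 ^ 2 + z 2 ^ 2 = 0 := by
    nlinarith [lagrange, mul_nonpos_of_nonneg_of_nonpos (sq_nonneg (u 0)) hqz, sq_nonneg (z 1),
      sq_nonneg (z 2)]
  have hz1 : z 1 = 0 := by nlinarith [sq_nonneg (z 1), sq_nonneg (z 2)]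
  have hz2 : z 2 = 0 := by nlinarith [sq_nonneg (z 1), sq_nonneg (z 2)]
  have hu0 : u 0 ≠ 0 := by
    intro h0
    simp only [q, h0] at hu
    nlinarith [sq_nonneg (u 1), sq_nonneg (u 2)]
  have hz0 : z 0 = 0 := by
    simp only [mbil, hz1, hz2] at h
    simpa [hu0] using h
  exact hz (funext fun i => by fin_cases i <;> assumption)

/-- The Euclidean cross product of `J u` and `J w`, where `J = diag (-1, 1, 1)`; it is
`mbil`-orthogonal to `u` and `w`. -/
def mcross (u w : Fin 3 → ℝ) : Fin 3 → ℝ :=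
  ![u 1 * w 2 - u 2 * w 1, u 0 * w 2 - u 2 * w 0, u 1 * w 0 - u 0 * w 1]

lemma q_mcross (u w : Fin 3 → ℝ) : q (mcross u w) = mbil u w ^ 2 - q u * q w := by
  simp only [mcross, q, mbil, Matrix.cons_val]; ring

lemma smul_eq_smul_mcross {u w z : Fin 3 → ℝ} (hu : mbil u z = 0) (hw : mbil w z = 0) :
    q (mcross u w) • z = mbil z (mcross u w) • mcross u w := by
  simp only [mbil] at hu hw
  funext i
  fin_cases i <;>
    simp only [q, mbil, mcross, Matrix.cons_val, Matrix.cons_val_zero, Matrix.cons_val_one,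
      Fin.zero_eta, Fin.mk_one, Fin.reduceFinMk, Fin.isValue, Pi.smul_apply, smul_eq_mul]
  · linear_combination ((u 0 * w 2 - u 2 * w 0) * u 2 - (u 1 * w 0 - u 0 * w 1) * u 1) * hw +
      (-(u 0 * w 2 - u 2 * w 0) * w 2 + (u 1 * w 0 - u 0 * w 1) * w 1) * hu
  · linear_combination ((u 1 * w 2 - u 2 * w 1) * u 2 - (u 1 * w 0 - u 0 * w 1) * u 0) * hw +
      (-(u 1 * w 2 - u 2 * w 1) * w 2 + (u 1 * w 0 - u 0 * w 1) * w 0) * hu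
  · linear_combination (-(u 1 * w 2 - u 2 * w 1) * u 1 + (u 0 * w 2 - u 2 * w 0) * u 0) * hw +
      ((u 1 * w 2 - u 2 * w 1) * w 1 - (u 0 * w 2 - u 2 * w 0) * w 0) * hu

lemma eq_of_lightlike_of_sub_eq_smul {P x y z n : Fin 3 → ℝ} {s t : ℝ} (hn : q n ≠ 0)
    (hx : q (x - P) = 0) (hy : q (y - P) = 0) (hz : q (z - P) = 0)
    (hyx : y - x = s • n) (hzx : z - x = t • n) (hxy : x ≠ y) (hxz : x ≠ z) : y = z := by
  have chord : ∀ r : ℝ, r ≠ 0 → q (x - P + r • n) = 0 → r * q n = -2 * mbil n (x - P) := by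
    intro r hr h
    rw [q_add_smul, hx] at h
    apply mul_left_cancel₀ hr
    linear_combination h
  have hs : s ≠ 0 := by rintro rfl; exact hxy (sub_eq_zero.mp (hyx.trans (zero_smul ℝ n))).symm
  have ht : t ≠ 0 := by rintro rfl; exact hxz (sub_eq_zero.mp (hzx.trans (zero_smul ℝ n))).symm
  have hs' := chord s hs (by rw [← hyx, sub_add_sub_cancel']; exact hy)
  have ht' := chord t ht (by rw [← hzx, sub_add_sub_cancel']; exact hz)
  have hst : s = t := mul_right_cancel₀ hn (hs'.trans ht'.symm)
  rw [← sub_left_inj (a := x), hyx, hzx, hst]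

lemma exists_eq_smul_of_lightlike {u v c d e P : Fin 3 → ℝ} (hu : q u < 0)
    (hc : q (c - P) = 0) (hd : q (d - P) = 0) (he : q (e - P) = 0)
    (hcd : c ≠ d) (hce : c ≠ e) (hde : d ≠ e)
    (hdu : mbil d u = mbil c u) (heu : mbil e u = mbil c u)
    (hdv : mbil d v = mbil c v) (hev : mbil e v = mbil c v) : ∃ ν : ℝ, v = ν • u := by
  refine ⟨mbil u v / q u, sub_eq_zero.mp ?_⟩
  set w := v - (mbil u v / q u) • u
  have huw : mbil u w = 0 := by
    rw [mbil_sub_right, mbil_smul_right, mbil_self, div_mul_cancel₀ _ hu.ne, sub_self]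
  by_contra hw
  set n := mcross u w
  have hn : 0 < q n := by
    rw [q_mcross, huw]
    nlinarith [q_pos_of_mbil_eq_zero hu huw hw]
  have along_n : ∀ y, mbil y u = mbil c u → mbil y v = mbil c v →
      y - c = (mbil (y - c) n / q n) • n := by
    intro y hyu hyv
    have h_u : mbil u (y - c) = 0 := by rw [mbil_comm, mbil_sub_left, hyu, sub_self]
    have h_w : mbil w (y - c) = 0 := by
      rw [mbil_comm, mbil_sub_right, mbil_smul_right, mbil_sub_left, mbil_sub_left, hyu, hyv]
      ring
    rw [div_eq_inv_mul, mul_smul, ← smul_eq_smul_mcross h_u h_w, smul_smul,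
      inv_mul_cancel₀ hn.ne', one_smul]
  exact hde (eq_of_lightlike_of_sub_eq_smul hn.ne' hc hd he (along_n d hdu hdv)
    (along_n e heu hev) hcd hce)

theorem caseB_general
    (P₁ P₂ P₃ P₄ P₅ P₆ a b c d e f : Fin 3 → ℝ)
    (hdist : List.Pairwise (· ≠ ·) [P₁, P₂, P₃, P₄, P₅, P₆, a, b, c, d, e, f])
    (hst : Stitch P₁ P₂ P₃ P₄ P₅ P₆ a b c d e f)
    (h12 : q (P₂ - P₁) < 0)
    (hpar : ∃ κ : ℝ, P₄ - P₃ = κ • (P₂ - P₁)) :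
    q (f - P₆) = 0 := by
  obtain ⟨ha1, ha2, ha3, ha4, -, -, -, -, hc1, hc2, hc5, hc6,
    hd1, hd2, hd5, hd6, he3, he4, he5, he6, hf3, hf4, hf5⟩ := hst
  simp only [List.pairwise_cons, List.mem_cons, List.not_mem_nil, or_false, forall_eq_or_imp,
    forall_eq, List.Pairwise.nil] at hdist
  have h34 : P₃ ≠ P₄ := by tauto
  have hcd : c ≠ d := by tauto
  have hce : c ≠ e := by tauto
  have hde : d ≠ e := by tauto
  obtain ⟨κ, hκ⟩ := hpar
  have hκ0 : κ ≠ 0 := by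
    rintro rfl
    exact h34 (sub_eq_zero.mp (hκ.trans (zero_smul ℝ _))).symm
  have plane34 : ∀ {x}, q (x - P₃) = 0 → q (x - P₄) = 0 →
      mbil x (P₂ - P₁) = mbil a (P₂ - P₁) := by
    intro x hx3 hx4
    have h := mbil_eq_of_lightlike ha3 ha4 hx3 hx4
    rw [hκ, mbil_smul_right, mbil_smul_right] at h
    exact mul_left_cancel₀ hκ0 h
  have hca := mbil_eq_of_lightlike ha1 ha2 hc1 hc2
  obtain ⟨ν, hν⟩ := exists_eq_smul_of_lightlike h12 hc5 hd5 he5 hcd hce hde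
    (mbil_eq_of_lightlike hc1 hc2 hd1 hd2) ((plane34 he3 he4).trans hca.symm)
    (mbil_eq_of_lightlike hc5 hc6 hd5 hd6) (mbil_eq_of_lightlike hc5 hc6 he5 he6)
  have hfc : mbil f (P₆ - P₅) = mbil c (P₆ - P₅) := by
    rw [hν, mbil_smul_right, mbil_smul_right, (plane34 hf3 hf4).trans hca.symm]
  linarith [q_sub_sub_q_sub c f P₅ P₆]

/-- Case B of the proof of Theorem 1: lines 12 and 34 are timelike and parallel. -/
theorem caseB
    (P₁ P₂ P₃ P₄ P₅ P₆ a b c d e f : Fin 3 → ℝ)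
    (hdist : List.Pairwise (· ≠ ·) [P₁, P₂, P₃, P₄, P₅, P₆, a, b, c, d, e, f])
    (hst : Stitch P₁ P₂ P₃ P₄ P₅ P₆ a b c d e f)
    (h12 : q (P₂ - P₁) < 0) (h34 : q (P₄ - P₃) < 0)
    (hpar : ∃ κ : ℝ, P₄ - P₃ = κ • (P₂ - P₁)) :
    q (f - P₆) = 0 :=
  caseB_general P₁ P₂ P₃ P₄ P₅ P₆ a b c d e f hdist hst h12 hpar
end
end

section
/- Case C of the proof of Theorem 1: Let P₁, P₂, P₃, P₄, P₅, P₆, a, b, c, d, e, f be twelve pairwise distinct points of V satisfying the 23 stitching relations. Suppose the directions P₂ − P₁ and P₄ − P₃ are both spacelike, i.e. q(P₂ − P₁) > 0 and q(P₄ − P₃) > 0, and are parallel, i.e. P₄ − P₃ = κ • (P₂ − P₁) for some κ ∈ ℝ. Then q(f − P₆) = 0. -/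
noncomputable section

/-! ### Auxiliary scalar lemmas -/

/-- The first null linear form on the plane orthogonal to the spacelike vector `n`. -/
def LL (n0 n1 n2 r x0 x1 x2 : ℝ) : ℝ :=
  -(n1^2+n2^2)*x0 + (n0*n1 - r*n2)*x1 + (n0*n2 + r*n1)*x2

/-- The second null linear form on the plane orthogonal to the spacelike vector `n`. -/
def MN (n0 n1 n2 r x0 x1 x2 : ℝ) : ℝ :=
  -(n1^2+n2^2)*x0 + (n0*n1 + r*n2)*x1 + (n0*n2 - r*n1)*x2

lemma relid (n0 n1 n2 r β w0 w1 w2 : ℝ)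
    (hr : r^2 = -n0^2 + n1^2 + n2^2)
    (hN : -n0*w0 + n1*w1 + n2*w2 = -β) :
    (-(n1^2+n2^2)*w0 + (n0*n1 - r*n2)*w1 + (n0*n2 + r*n1)*w2) *
    (-(n1^2+n2^2)*w0 + (n0*n1 + r*n2)*w1 + (n0*n2 - r*n1)*w2)
    = β^2*(n1^2+n2^2) - r^2*(n1^2+n2^2)*(-w0^2 + w1^2 + w2^2) := by
  linear_combination (β^2 - n0*β*w0 - (n1^2+n2^2)*w0^2 + n0*w0*(n1*w1+n2*w2)) * hr +
    ((n0^2+r^2)*(n1*w1+n2*w2-β) - n0*(n1^2+n2^2)*w0) * hN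

lemma hyp (n0 n1 n2 r β X0 X1 X2 Q0 Q1 Q2 : ℝ)
    (hr : r^2 = -n0^2 + n1^2 + n2^2)
    (hN : -n0*(X0-Q0) + n1*(X1-Q1) + n2*(X2-Q2) = -β)
    (hq : -(X0-Q0)^2 + (X1-Q1)^2 + (X2-Q2)^2 = 0) :
    (LL n0 n1 n2 r X0 X1 X2 - LL n0 n1 n2 r Q0 Q1 Q2) *
    (MN n0 n1 n2 r X0 X1 X2 - MN n0 n1 n2 r Q0 Q1 Q2) = β^2*(n1^2+n2^2) := by
  have H := relid n0 n1 n2 r β (X0-Q0) (X1-Q1) (X2-Q2) hr hN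
  simp only [LL, MN]
  linear_combination H - r^2*(n1^2+n2^2)*hq

lemma inj3 (n0 n1 n2 r w0 w1 w2 : ℝ) (hrpos : 0 < r)
    (hr : r^2 = -n0^2 + n1^2 + n2^2)
    (hL : -(n1^2+n2^2)*w0 + (n0*n1 - r*n2)*w1 + (n0*n2 + r*n1)*w2 = 0)
    (hM : -(n1^2+n2^2)*w0 + (n0*n1 + r*n2)*w1 + (n0*n2 - r*n1)*w2 = 0)
    (hN : -n0*w0 + n1*w1 + n2*w2 = 0) :
    w0 = 0 ∧ w1 = 0 ∧ w2 = 0 := by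
  have hT : n1*w2 - n2*w1 = 0 := by
    have h2 : (2*r)*(n1*w2 - n2*w1) = 0 := by linear_combination hL - hM
    rcases mul_eq_zero.mp h2 with h | h
    · exact absurd h (by positivity)
    · exact h
  have h3 : r^2 * w0 = 0 := by
    linear_combination (-(1:ℝ)/2)*hL + (-(1:ℝ)/2)*hM + n0*hN + w0*hr
  have hw0 : w0 = 0 := by
    rcases mul_eq_zero.mp h3 with h | h
    · exact absurd h (by positivity)
    · exact h
  have hD : 0 < n1^2+n2^2 := by
    have h1 := pow_pos hrpos 2; have h2 := sq_nonneg n0; linarith [hr]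
  have h4 : (n1^2+n2^2) * w1 = 0 := by linear_combination n1*hN - n2*hT + n0*n1*hw0
  have h5 : (n1^2+n2^2) * w2 = 0 := by linear_combination n2*hN + n1*hT + n0*n2*hw0
  refine ⟨hw0, ?_, ?_⟩
  · rcases mul_eq_zero.mp h4 with h | h
    · exact absurd h (ne_of_gt hD)
    · exact h
  · rcases mul_eq_zero.mp h5 with h | h
    · exact absurd h (ne_of_gt hD)
    · exact h

lemma twoD (U1 V1 k1 U5 V5 k5 U6 V6 k6 uc vc ud vd ue ve uf vf : ℝ)
    (hk1 : k1 ≠ 0)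
    (hcd : uc = ud → vc = vd → False)
    (hce : uc = ue → vc = ve → False)
    (hde : ud = ue → vd = ve → False)
    (hc1 : (uc - U1) * (vc - V1) = k1)
    (hd1 : (ud - U1) * (vd - V1) = k1)
    (hc5 : (uc - U5) * (vc - V5) = k5)
    (hd5 : (ud - U5) * (vd - V5) = k5)
    (he5 : (ue - U5) * (ve - V5) = k5)
    (hc6 : (uc - U6) * (vc - V6) = k6)
    (hd6 : (ud - U6) * (vd - V6) = k6)
    (he6 : (ue - U6) * (ve - V6) = k6)
    (hf5 : (uf - U5) * (vf - V5) = k5) :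
    (uf - U6) * (vf - V6) = k6 := by
  set A := V6 - V5 with hA
  set B := U6 - U5 with hB
  set E := k5 - k6 - U5*V5 + U6*V6 with hE
  have hcL : A*uc + B*vc = E := by rw [hA, hB, hE]; linear_combination hc5 - hc6
  have hdL : A*ud + B*vd = E := by rw [hA, hB, hE]; linear_combination hd5 - hd6
  have heL : A*ue + B*ve = E := by rw [hA, hB, hE]; linear_combination he5 - he6
  have key : A = 0 ∧ B = 0 := by
    by_cases hBz : B = 0
    · refine ⟨?_, hBz⟩
      by_contra hAz
      have hucud : uc = ud := by
        have h : A * (uc - ud) = 0 := by rw [hBz] at hcL hdL; linear_combination hcL - hdL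
        rcases mul_eq_zero.mp h with h | h
        · exact absurd h hAz
        · linarith
      have hu1 : uc - U1 ≠ 0 := by
        intro h; rw [h] at hc1; simp at hc1; exact hk1 hc1.symm
      rw [← hucud] at hd1
      have hv : vc = vd := by
        have h : (uc - U1) * (vc - vd) = 0 := by
          linear_combination hc1 - hd1
        rcases mul_eq_zero.mp h with h | h
        · exact absurd h hu1
        · linarith
      exact hcd hucud hv
    · exfalso
      by_cases hAz : A = 0
      · have hv : vc = vd := by
          have h : B * (vc - vd) = 0 := by rw [hAz] at hcL hdL; linear_combination hcL - hdL
          rcases mul_eq_zero.mp h with h | h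
          · exact absurd h hBz
          · linarith
        have hv1 : vc - V1 ≠ 0 := by
          intro h; rw [h] at hc1; simp at hc1; exact hk1 hc1.symm
        rw [← hv] at hd1
        have hu : uc = ud := by
          have h : (vc - V1) * (uc - ud) = 0 := by
            linear_combination hc1 - hd1
          rcases mul_eq_zero.mp h with h | h
          · exact absurd h hv1
          · linarith
        exact hcd hu hv
      · have hud : ∀ x y vx vy : ℝ, A*x + B*vx = E → A*y + B*vy = E → x = y → vx = vy := by
          intro x y vx vy h1 h2 hxy
          have h : B * (vx - vy) = 0 := by rw [hxy] at h1; linear_combination h1 - h2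
          rcases mul_eq_zero.mp h with h | h
          · exact absurd h hBz
          · linarith
        have hcd' : uc ≠ ud := fun h => hcd h (hud _ _ _ _ hcL hdL h)
        have hce' : uc ≠ ue := fun h => hce h (hud _ _ _ _ hcL heL h)
        have hde' : ud ≠ ue := fun h => hde h (hud _ _ _ _ hdL heL h)
        have Pc : -A*uc^2 + (E - B*V5 + A*U5)*uc + (-U5*E + U5*B*V5 - B*k5) = 0 := by
          linear_combination B*hc5 - (uc - U5)*hcL
        have Pd : -A*ud^2 + (E - B*V5 + A*U5)*ud + (-U5*E + U5*B*V5 - B*k5) = 0 := by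
          linear_combination B*hd5 - (ud - U5)*hdL
        have Pe : -A*ue^2 + (E - B*V5 + A*U5)*ue + (-U5*E + U5*B*V5 - B*k5) = 0 := by
          linear_combination B*he5 - (ue - U5)*heL
        have h1 : (uc - ud) * (-A*(uc + ud) + (E - B*V5 + A*U5)) = 0 := by
          linear_combination Pc - Pd
        have h2 : (uc - ue) * (-A*(uc + ue) + (E - B*V5 + A*U5)) = 0 := by
          linear_combination Pc - Pe
        have h1' : -A*(uc + ud) + (E - B*V5 + A*U5) = 0 := by
          rcases mul_eq_zero.mp h1 with h | h
          · exact absurd (by linarith : uc = ud) hcd'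
          · exact h
        have h2' : -A*(uc + ue) + (E - B*V5 + A*U5) = 0 := by
          rcases mul_eq_zero.mp h2 with h | h
          · exact absurd (by linarith : uc = ue) hce'
          · exact h
        have h3 : A * (ud - ue) = 0 := by linear_combination h2' - h1'
        rcases mul_eq_zero.mp h3 with h | h
        · exact hAz h
        · exact hde' (by linarith)
  obtain ⟨hA0, hB0⟩ := key
  have hU : U5 = U6 := by rw [hB] at hB0; linarith
  have hV : V5 = V6 := by rw [hA] at hA0; linarith
  have hk : k5 = k6 := by rw [hU, hV] at hc5; linarith [hc5, hc6]
  rw [hU, hV] at hf5; linarith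

lemma master (n0 n1 n2 r P10 P11 P12 P50 P51 P52 P60 P61 P62
    c0 c1 c2 d0 d1 d2 e0 e1 e2 f0 f1 f2 : ℝ)
    (hrpos : 0 < r)
    (hr : r^2 = -n0^2 + n1^2 + n2^2)
    (hcd : c0 = d0 → c1 = d1 → c2 = d2 → False)
    (hce : c0 = e0 → c1 = e1 → c2 = e2 → False)
    (hde : d0 = e0 → d1 = e1 → d2 = e2 → False)
    (hpld : -n0*d0 + n1*d1 + n2*d2 = -n0*c0 + n1*c1 + n2*c2)
    (hple : -n0*e0 + n1*e1 + n2*e2 = -n0*c0 + n1*c1 + n2*c2)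
    (hplf : -n0*f0 + n1*f1 + n2*f2 = -n0*c0 + n1*c1 + n2*c2)
    (hc1 : -(c0-P10)^2 + (c1-P11)^2 + (c2-P12)^2 = 0)
    (hc2 : -(c0-P10-n0)^2 + (c1-P11-n1)^2 + (c2-P12-n2)^2 = 0)
    (hd1 : -(d0-P10)^2 + (d1-P11)^2 + (d2-P12)^2 = 0)
    (hc5 : -(c0-P50)^2 + (c1-P51)^2 + (c2-P52)^2 = 0)
    (hc6 : -(c0-P60)^2 + (c1-P61)^2 + (c2-P62)^2 = 0)
    (hd5 : -(d0-P50)^2 + (d1-P51)^2 + (d2-P52)^2 = 0)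
    (hd6 : -(d0-P60)^2 + (d1-P61)^2 + (d2-P62)^2 = 0)
    (he5 : -(e0-P50)^2 + (e1-P51)^2 + (e2-P52)^2 = 0)
    (he6 : -(e0-P60)^2 + (e1-P61)^2 + (e2-P62)^2 = 0)
    (hf5 : -(f0-P50)^2 + (f1-P51)^2 + (f2-P52)^2 = 0) :
    -(f0-P60)^2 + (f1-P61)^2 + (f2-P62)^2 = 0 := by
  have hD : 0 < n1^2+n2^2 := by
    have h1 := pow_pos hrpos 2; have h2 := sq_nonneg n0; linarith [hr]
  set ν := -n0*c0 + n1*c1 + n2*c2 with hν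
  set β₁ := (-n0*P10 + n1*P11 + n2*P12) - ν with hβ₁
  set β₅ := (-n0*P50 + n1*P51 + n2*P52) - ν with hβ₅
  set β₆ := (-n0*P60 + n1*P61 + n2*P62) - ν with hβ₆
  have Hc1 : (LL n0 n1 n2 r c0 c1 c2 - LL n0 n1 n2 r P10 P11 P12) *
      (MN n0 n1 n2 r c0 c1 c2 - MN n0 n1 n2 r P10 P11 P12) = β₁^2*(n1^2+n2^2) :=
    hyp n0 n1 n2 r β₁ c0 c1 c2 P10 P11 P12 hr (by rw [hβ₁, hν]; ring) hc1
  have Hd1 : (LL n0 n1 n2 r d0 d1 d2 - LL n0 n1 n2 r P10 P11 P12) *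
      (MN n0 n1 n2 r d0 d1 d2 - MN n0 n1 n2 r P10 P11 P12) = β₁^2*(n1^2+n2^2) :=
    hyp n0 n1 n2 r β₁ d0 d1 d2 P10 P11 P12 hr (by rw [hβ₁, hν]; linear_combination hpld) hd1
  have Hc5 : (LL n0 n1 n2 r c0 c1 c2 - LL n0 n1 n2 r P50 P51 P52) *
      (MN n0 n1 n2 r c0 c1 c2 - MN n0 n1 n2 r P50 P51 P52) = β₅^2*(n1^2+n2^2) :=
    hyp n0 n1 n2 r β₅ c0 c1 c2 P50 P51 P52 hr (by rw [hβ₅, hν]; ring) hc5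
  have Hd5 : (LL n0 n1 n2 r d0 d1 d2 - LL n0 n1 n2 r P50 P51 P52) *
      (MN n0 n1 n2 r d0 d1 d2 - MN n0 n1 n2 r P50 P51 P52) = β₅^2*(n1^2+n2^2) :=
    hyp n0 n1 n2 r β₅ d0 d1 d2 P50 P51 P52 hr (by rw [hβ₅, hν]; linear_combination hpld) hd5
  have He5 : (LL n0 n1 n2 r e0 e1 e2 - LL n0 n1 n2 r P50 P51 P52) *
      (MN n0 n1 n2 r e0 e1 e2 - MN n0 n1 n2 r P50 P51 P52) = β₅^2*(n1^2+n2^2) :=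
    hyp n0 n1 n2 r β₅ e0 e1 e2 P50 P51 P52 hr (by rw [hβ₅, hν]; linear_combination hple) he5
  have Hc6 : (LL n0 n1 n2 r c0 c1 c2 - LL n0 n1 n2 r P60 P61 P62) *
      (MN n0 n1 n2 r c0 c1 c2 - MN n0 n1 n2 r P60 P61 P62) = β₆^2*(n1^2+n2^2) :=
    hyp n0 n1 n2 r β₆ c0 c1 c2 P60 P61 P62 hr (by rw [hβ₆, hν]; ring) hc6
  have Hd6 : (LL n0 n1 n2 r d0 d1 d2 - LL n0 n1 n2 r P60 P61 P62) *
      (MN n0 n1 n2 r d0 d1 d2 - MN n0 n1 n2 r P60 P61 P62) = β₆^2*(n1^2+n2^2) :=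
    hyp n0 n1 n2 r β₆ d0 d1 d2 P60 P61 P62 hr (by rw [hβ₆, hν]; linear_combination hpld) hd6
  have He6 : (LL n0 n1 n2 r e0 e1 e2 - LL n0 n1 n2 r P60 P61 P62) *
      (MN n0 n1 n2 r e0 e1 e2 - MN n0 n1 n2 r P60 P61 P62) = β₆^2*(n1^2+n2^2) :=
    hyp n0 n1 n2 r β₆ e0 e1 e2 P60 P61 P62 hr (by rw [hβ₆, hν]; linear_combination hple) he6
  have Hf5 : (LL n0 n1 n2 r f0 f1 f2 - LL n0 n1 n2 r P50 P51 P52) *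
      (MN n0 n1 n2 r f0 f1 f2 - MN n0 n1 n2 r P50 P51 P52) = β₅^2*(n1^2+n2^2) :=
    hyp n0 n1 n2 r β₅ f0 f1 f2 P50 P51 P52 hr (by rw [hβ₅, hν]; linear_combination hplf) hf5
  have Hc2 : (LL n0 n1 n2 r c0 c1 c2 - LL n0 n1 n2 r P10 P11 P12) *
      (MN n0 n1 n2 r c0 c1 c2 - MN n0 n1 n2 r P10 P11 P12) = (β₁+r^2)^2*(n1^2+n2^2) := by
    have H := relid n0 n1 n2 r (β₁+r^2) (c0-P10-n0) (c1-P11-n1) (c2-P12-n2) hr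
      (by rw [hβ₁, hν]; linear_combination hr)
    simp only [LL, MN]
    linear_combination H - r^2*(n1^2+n2^2)*hc2
  have hk1 : β₁^2*(n1^2+n2^2) ≠ 0 := by
    have h2β : (2*β₁+r^2)*(r^2*(n1^2+n2^2)) = 0 := by linear_combination Hc1 - Hc2
    have hrD : r^2*(n1^2+n2^2) ≠ 0 := ne_of_gt (mul_pos (pow_pos hrpos 2) hD)
    have hβne : β₁ ≠ 0 := by
      rcases mul_eq_zero.mp h2β with h | h
      · intro hb; rw [hb] at h
        have : r^2 = 0 := by linarith
        exact absurd this (ne_of_gt (pow_pos hrpos 2))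
      · exact absurd h hrD
    exact mul_ne_zero (pow_ne_zero 2 hβne) (ne_of_gt hD)
  have hinj : ∀ x0 x1 x2 y0 y1 y2 : ℝ,
      (-n0*y0 + n1*y1 + n2*y2 = -n0*x0 + n1*x1 + n2*x2) →
      LL n0 n1 n2 r x0 x1 x2 = LL n0 n1 n2 r y0 y1 y2 →
      MN n0 n1 n2 r x0 x1 x2 = MN n0 n1 n2 r y0 y1 y2 →
      x0 = y0 ∧ x1 = y1 ∧ x2 = y2 := by
    intro x0 x1 x2 y0 y1 y2 hpl hL hM
    simp only [LL, MN] at hL hM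
    obtain ⟨h0, h1, h2⟩ := inj3 n0 n1 n2 r (x0-y0) (x1-y1) (x2-y2) hrpos hr
      (by linear_combination hL) (by linear_combination hM) (by linear_combination -hpl)
    exact ⟨by linarith, by linarith, by linarith⟩
  have hcd2 : LL n0 n1 n2 r c0 c1 c2 = LL n0 n1 n2 r d0 d1 d2 →
      MN n0 n1 n2 r c0 c1 c2 = MN n0 n1 n2 r d0 d1 d2 → False := by
    intro hL hM
    obtain ⟨h0, h1, h2⟩ := hinj c0 c1 c2 d0 d1 d2 (by rw [← hν]; exact hpld) hL hM
    exact hcd h0 h1 h2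
  have hce2 : LL n0 n1 n2 r c0 c1 c2 = LL n0 n1 n2 r e0 e1 e2 →
      MN n0 n1 n2 r c0 c1 c2 = MN n0 n1 n2 r e0 e1 e2 → False := by
    intro hL hM
    obtain ⟨h0, h1, h2⟩ := hinj c0 c1 c2 e0 e1 e2 (by rw [← hν]; exact hple) hL hM
    exact hce h0 h1 h2
  have hde2 : LL n0 n1 n2 r d0 d1 d2 = LL n0 n1 n2 r e0 e1 e2 →
      MN n0 n1 n2 r d0 d1 d2 = MN n0 n1 n2 r e0 e1 e2 → False := by
    intro hL hM
    obtain ⟨h0, h1, h2⟩ := hinj d0 d1 d2 e0 e1 e2 (by rw [hple]; exact hpld.symm ▸ rfl) hL hM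
    exact hde h0 h1 h2
  have HF6 := twoD (LL n0 n1 n2 r P10 P11 P12) (MN n0 n1 n2 r P10 P11 P12) (β₁^2*(n1^2+n2^2))
    (LL n0 n1 n2 r P50 P51 P52) (MN n0 n1 n2 r P50 P51 P52) (β₅^2*(n1^2+n2^2))
    (LL n0 n1 n2 r P60 P61 P62) (MN n0 n1 n2 r P60 P61 P62) (β₆^2*(n1^2+n2^2))
    (LL n0 n1 n2 r c0 c1 c2) (MN n0 n1 n2 r c0 c1 c2)
    (LL n0 n1 n2 r d0 d1 d2) (MN n0 n1 n2 r d0 d1 d2)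
    (LL n0 n1 n2 r e0 e1 e2) (MN n0 n1 n2 r e0 e1 e2)
    (LL n0 n1 n2 r f0 f1 f2) (MN n0 n1 n2 r f0 f1 f2)
    hk1 hcd2 hce2 hde2 Hc1 Hd1 Hc5 Hd5 He5 Hc6 Hd6 He6 Hf5
  have H := relid n0 n1 n2 r β₆ (f0-P60) (f1-P61) (f2-P62) hr
    (by rw [hβ₆, hν]; linear_combination hplf)
  simp only [LL, MN] at HF6
  have hzero : r^2*(n1^2+n2^2) * (-(f0-P60)^2 + (f1-P61)^2 + (f2-P62)^2) = 0 := by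
    linear_combination H - HF6
  rcases mul_eq_zero.mp hzero with h | h
  · exact absurd h (ne_of_gt (mul_pos (pow_pos hrpos 2) hD))
  · exact h

/-- Case C of the proof of Theorem 1: lines 12 and 34 are spacelike and parallel. -/
theorem caseC
    (P₁ P₂ P₃ P₄ P₅ P₆ a b c d e f : Fin 3 → ℝ)
    (hdist : List.Pairwise (· ≠ ·) [P₁, P₂, P₃, P₄, P₅, P₆, a, b, c, d, e, f])
    (hst : Stitch P₁ P₂ P₃ P₄ P₅ P₆ a b c d e f)
    (h12 : q (P₂ - P₁) > 0) (h34 : q (P₄ - P₃) > 0)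
    (hpar : ∃ κ : ℝ, P₄ - P₃ = κ • (P₂ - P₁)) :
    q (f - P₆) = 0 := by
  obtain ⟨κ, hκ⟩ := hpar
  obtain ⟨ha1, ha2, ha3, ha4, hb1, hb2, hb3, hb4, hc1, hc2, hc5, hc6,
    hd1, hd2, hd5, hd6, he3, he4, he5, he6, hf3, hf4, hf5⟩ := hst
  simp only [List.pairwise_cons] at hdist
  obtain ⟨-, -, -, -, -, -, -, -, hcall, hdall, -⟩ := hdist
  have hcd3 : c ≠ d := hcall d (by simp)
  have hce3 : c ≠ e := hcall e (by simp)
  have hde3 : d ≠ e := hdall e (by simp)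
  have hκ0 : P₄ 0 - P₃ 0 = κ * (P₂ 0 - P₁ 0) := by simpa using congrFun hκ 0
  have hκ1 : P₄ 1 - P₃ 1 = κ * (P₂ 1 - P₁ 1) := by simpa using congrFun hκ 1
  have hκ2 : P₄ 2 - P₃ 2 = κ * (P₂ 2 - P₁ 2) := by simpa using congrFun hκ 2
  have hκne : κ ≠ 0 := by
    rintro rfl
    have h0 : q (P₄ - P₃) = 0 := by
      simp only [q, Pi.sub_apply]
      linear_combination (-(P₄ 0 - P₃ 0))*hκ0 + (P₄ 1 - P₃ 1)*hκ1 + (P₄ 2 - P₃ 2)*hκ2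
    linarith
  set r := Real.sqrt (q (P₂ - P₁)) with hrdef
  have hrpos : 0 < r := Real.sqrt_pos.mpr h12
  have hr2 : r^2 = q (P₂ - P₁) := Real.sq_sqrt (le_of_lt h12)
  simp only [q, Pi.sub_apply] at hr2 ha1 ha2 ha3 ha4 hc1 hc2 hc5 hc6 hd1 hd2 hd5 hd6 he3 he4 he5 he6 hf3 hf4 hf5 ⊢
  have hpld : -(P₂ 0 - P₁ 0)*(d 0) + (P₂ 1 - P₁ 1)*(d 1) + (P₂ 2 - P₁ 2)*(d 2)
      = -(P₂ 0 - P₁ 0)*(c 0) + (P₂ 1 - P₁ 1)*(c 1) + (P₂ 2 - P₁ 2)*(c 2) := by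
    linear_combination ((1:ℝ)/2)*hd1 - (1/2)*hd2 - (1/2)*hc1 + (1/2)*hc2
  have hpla : -(P₂ 0 - P₁ 0)*(a 0) + (P₂ 1 - P₁ 1)*(a 1) + (P₂ 2 - P₁ 2)*(a 2)
      = -(P₂ 0 - P₁ 0)*(c 0) + (P₂ 1 - P₁ 1)*(c 1) + (P₂ 2 - P₁ 2)*(c 2) := by
    linear_combination ((1:ℝ)/2)*ha1 - (1/2)*ha2 - (1/2)*hc1 + (1/2)*hc2
  have hκe : κ * ((-(P₂ 0 - P₁ 0)*(e 0) + (P₂ 1 - P₁ 1)*(e 1) + (P₂ 2 - P₁ 2)*(e 2))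
      - (-(P₂ 0 - P₁ 0)*(a 0) + (P₂ 1 - P₁ 1)*(a 1) + (P₂ 2 - P₁ 2)*(a 2))) = 0 := by
    linear_combination ((1:ℝ)/2)*he3 - (1/2)*he4 - (1/2)*ha3 + (1/2)*ha4
      + (e 0 - a 0)*hκ0 - (e 1 - a 1)*hκ1 - (e 2 - a 2)*hκ2
  have hκf : κ * ((-(P₂ 0 - P₁ 0)*(f 0) + (P₂ 1 - P₁ 1)*(f 1) + (P₂ 2 - P₁ 2)*(f 2))
      - (-(P₂ 0 - P₁ 0)*(a 0) + (P₂ 1 - P₁ 1)*(a 1) + (P₂ 2 - P₁ 2)*(a 2))) = 0 := by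
    linear_combination ((1:ℝ)/2)*hf3 - (1/2)*hf4 - (1/2)*ha3 + (1/2)*ha4
      + (f 0 - a 0)*hκ0 - (f 1 - a 1)*hκ1 - (f 2 - a 2)*hκ2
  have hple : -(P₂ 0 - P₁ 0)*(e 0) + (P₂ 1 - P₁ 1)*(e 1) + (P₂ 2 - P₁ 2)*(e 2)
      = -(P₂ 0 - P₁ 0)*(c 0) + (P₂ 1 - P₁ 1)*(c 1) + (P₂ 2 - P₁ 2)*(c 2) := by
    rcases mul_eq_zero.mp hκe with h | h
    · exact absurd h hκne
    · linarith
  have hplf : -(P₂ 0 - P₁ 0)*(f 0) + (P₂ 1 - P₁ 1)*(f 1) + (P₂ 2 - P₁ 2)*(f 2)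
      = -(P₂ 0 - P₁ 0)*(c 0) + (P₂ 1 - P₁ 1)*(c 1) + (P₂ 2 - P₁ 2)*(c 2) := by
    rcases mul_eq_zero.mp hκf with h | h
    · exact absurd h hκne
    · linarith
  have hcdS : c 0 = d 0 → c 1 = d 1 → c 2 = d 2 → False := fun h0 h1 h2 =>
    hcd3 (funext fun i => by fin_cases i <;> assumption)
  have hceS : c 0 = e 0 → c 1 = e 1 → c 2 = e 2 → False := fun h0 h1 h2 =>
    hce3 (funext fun i => by fin_cases i <;> assumption)
  have hdeS : d 0 = e 0 → d 1 = e 1 → d 2 = e 2 → False := fun h0 h1 h2 =>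
    hde3 (funext fun i => by fin_cases i <;> assumption)
  exact master (P₂ 0 - P₁ 0) (P₂ 1 - P₁ 1) (P₂ 2 - P₁ 2) r (P₁ 0) (P₁ 1) (P₁ 2)
    (P₅ 0) (P₅ 1) (P₅ 2) (P₆ 0) (P₆ 1) (P₆ 2)
    (c 0) (c 1) (c 2) (d 0) (d 1) (d 2) (e 0) (e 1) (e 2) (f 0) (f 1) (f 2)
    hrpos hr2 hcdS hceS hdeS hpld hple hplf hc1 (by linear_combination hc2) hd1
    hc5 hc6 hd5 hd6 he5 he6 hf5
end
end

section
/- Case D of the proof of Theorem 1: Let P₁, P₂, P₃, P₄, P₅, P₆, a, b, c, d, e, f be twelve pairwise distinct points of V satisfying the 23 stitching relations. Suppose q(P₂ − P₁) ≠ 0, q(P₄ − P₃) ≠ 0, and the line through P₁ and P₂ meets the line through P₃ and P₄, i.e. there exist X ∈ V and s, u ∈ ℝ with X = P₁ + s • (P₂ − P₁) = P₃ + u • (P₄ − P₃). Then q(f − P₆) = 0. -/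
noncomputable section

/-- If a × b = 0 (componentwise) and b ≠ 0 then a is a scalar multiple of b. -/
private lemma par3 (a0 a1 a2 b0 b1 b2 : ℝ)
    (h01 : a0*b1 - a1*b0 = 0) (h02 : a0*b2 - a2*b0 = 0) (h12 : a1*b2 - a2*b1 = 0)
    (hb : ¬(b0 = 0 ∧ b1 = 0 ∧ b2 = 0)) :
    ∃ t : ℝ, a0 = t*b0 ∧ a1 = t*b1 ∧ a2 = t*b2 := by
  by_cases hb0 : b0 = 0
  · by_cases hb1 : b1 = 0
    · have hb2 : b2 ≠ 0 := by tauto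
      refine ⟨a2/b2, ?_, ?_, ?_⟩
      · rw [div_mul_eq_mul_div, eq_div_iff hb2]; linear_combination h02
      · rw [div_mul_eq_mul_div, eq_div_iff hb2]; linear_combination h12
      · rw [div_mul_eq_mul_div, eq_div_iff hb2]
    · refine ⟨a1/b1, ?_, ?_, ?_⟩
      · rw [div_mul_eq_mul_div, eq_div_iff hb1]; linear_combination h01
      · rw [div_mul_eq_mul_div, eq_div_iff hb1]
      · rw [div_mul_eq_mul_div, eq_div_iff hb1]; linear_combination -h12
  · refine ⟨a0/b0, ?_, ?_, ?_⟩
    · rw [div_mul_eq_mul_div, eq_div_iff hb0]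
    · rw [div_mul_eq_mul_div, eq_div_iff hb0]; linear_combination -h01
    · rw [div_mul_eq_mul_div, eq_div_iff hb0]; linear_combination -h02

/-- A null vector Minkowski-orthogonal to a nonzero null vector is a multiple of it. -/
private lemma nullperp (v0 v1 v2 m0 m1 m2 : ℝ)
    (hv : -v0^2 + v1^2 + v2^2 = 0)
    (hm : -m0^2 + m1^2 + m2^2 = 0)
    (hp : -(v0*m0) + v1*m1 + v2*m2 = 0)
    (hvne : ¬(v0 = 0 ∧ v1 = 0 ∧ v2 = 0)) :
    ∃ ρ : ℝ, m0 = ρ*v0 ∧ m1 = ρ*v1 ∧ m2 = ρ*v2 := by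
  have hv0 : v0 ≠ 0 := by
    intro h
    exact hvne ⟨h, by nlinarith [sq_nonneg v1, sq_nonneg v2],
      by nlinarith [sq_nonneg v1, sq_nonneg v2]⟩
  have key : (m1*v0 - m0*v1)^2 + (m2*v0 - m0*v2)^2 = 0 := by
    linear_combination v0^2 * hm + m0^2 * hv - 2*v0*m0*hp
  have h1 : m1*v0 - m0*v1 = 0 := by
    nlinarith [sq_nonneg (m1*v0 - m0*v1), sq_nonneg (m2*v0 - m0*v2)]
  have h2 : m2*v0 - m0*v2 = 0 := by
    nlinarith [sq_nonneg (m1*v0 - m0*v1), sq_nonneg (m2*v0 - m0*v2)]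
  refine ⟨m0/v0, ?_, ?_, ?_⟩
  · rw [div_mul_eq_mul_div, eq_div_iff hv0]
  · rw [div_mul_eq_mul_div, eq_div_iff hv0]; linear_combination h1
  · rw [div_mul_eq_mul_div, eq_div_iff hv0]; linear_combination h2

/-- Core linear-algebra step: if `a ≠ 0` annihilates `u, w, z` (Euclidean dot) and
`b` annihilates `u, w`, with `u, w` independent, then `b` annihilates `z`. -/
private lemma keyA (u0 u1 u2 w0 w1 w2 z0 z1 z2 a0 a1 a2 b0 b1 b2 : ℝ)
    (hu5 : u0*a0 + u1*a1 + u2*a2 = 0)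
    (hw5 : w0*a0 + w1*a1 + w2*a2 = 0)
    (hz5 : z0*a0 + z1*a1 + z2*a2 = 0)
    (hu6 : u0*b0 + u1*b1 + u2*b2 = 0)
    (hw6 : w0*b0 + w1*b1 + w2*b2 = 0)
    (ha : ¬(a0 = 0 ∧ a1 = 0 ∧ a2 = 0))
    (hK : ¬(u1*w2 - u2*w1 = 0 ∧ u2*w0 - u0*w2 = 0 ∧ u0*w1 - u1*w0 = 0)) :
    z0*b0 + z1*b1 + z2*b2 = 0 := by
  set K0 := u1*w2 - u2*w1 with hK0
  set K1 := u2*w0 - u0*w2 with hK1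
  set K2 := u0*w1 - u1*w0 with hK2
  have haK01 : a0*K1 - a1*K0 = 0 := by rw [hK0, hK1]; linear_combination u2*hw5 - w2*hu5
  have haK02 : a0*K2 - a2*K0 = 0 := by rw [hK0, hK2]; linear_combination w1*hu5 - u1*hw5
  have haK12 : a1*K2 - a2*K1 = 0 := by rw [hK1, hK2]; linear_combination u0*hw5 - w0*hu5
  have hbK01 : b0*K1 - b1*K0 = 0 := by rw [hK0, hK1]; linear_combination u2*hw6 - w2*hu6
  have hbK02 : b0*K2 - b2*K0 = 0 := by rw [hK0, hK2]; linear_combination w1*hu6 - u1*hw6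
  have hbK12 : b1*K2 - b2*K1 = 0 := by rw [hK1, hK2]; linear_combination u0*hw6 - w0*hu6
  obtain ⟨t, ht0, ht1, ht2⟩ := par3 a0 a1 a2 K0 K1 K2 haK01 haK02 haK12 hK
  obtain ⟨r, hr0, hr1, hr2⟩ := par3 b0 b1 b2 K0 K1 K2 hbK01 hbK02 hbK12 hK
  have htne : t ≠ 0 := by
    intro h; subst h; simp at ht0 ht1 ht2; exact ha ⟨ht0, ht1, ht2⟩
  have hb0' : b0 = (r/t)*a0 := by rw [hr0, ht0, div_mul_eq_mul_div, eq_div_iff htne]; ring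
  have hb1' : b1 = (r/t)*a1 := by rw [hr1, ht1, div_mul_eq_mul_div, eq_div_iff htne]; ring
  have hb2' : b2 = (r/t)*a2 := by rw [hr2, ht2, div_mul_eq_mul_div, eq_div_iff htne]; ring
  rw [hb0', hb1', hb2']
  linear_combination (r/t) * hz5

set_option maxHeartbeats 1000000 in
/-- Case D of the proof of Theorem 1: lines 12 and 34 are non-lightlike and intersect. -/
theorem caseD
    (P₁ P₂ P₃ P₄ P₅ P₆ a b c d e f : Fin 3 → ℝ)
    (hdist : List.Pairwise (· ≠ ·) [P₁, P₂, P₃, P₄, P₅, P₆, a, b, c, d, e, f])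
    (hst : Stitch P₁ P₂ P₃ P₄ P₅ P₆ a b c d e f)
    (h12 : q (P₂ - P₁) ≠ 0) (h34 : q (P₄ - P₃) ≠ 0)
    (hmeet : ∃ (X : Fin 3 → ℝ) (s u : ℝ),
      X = P₁ + s • (P₂ - P₁) ∧ X = P₃ + u • (P₄ - P₃)) :
    q (f - P₆) = 0 := by
  obtain ⟨X, s, u, hX1, hX2⟩ := hmeet
  obtain ⟨ha1, ha2, ha3, ha4, hb1, hb2, hb3, hb4, hc1, hc2, hc5, hc6,
    hd1, hd2, hd5, hd6, he3, he4, he5, he6, hf3, hf4, hf5⟩ := hst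
  simp only [List.pairwise_cons, List.mem_cons, List.not_mem_nil, or_false,
    List.mem_singleton, forall_eq_or_imp, forall_eq, List.Pairwise.nil] at hdist
  have h15 : P₁ ≠ P₅ := by tauto
  have h25 : P₂ ≠ P₅ := by tauto
  have hcd : c ≠ d := by tauto
  have hce : c ≠ e := by tauto
  have hde : d ≠ e := by tauto
  clear hdist
  -- points lightlike to P₁ and P₂ lie on a fixed "sphere" around X, and same for P₃, P₄
  have lineq12 : ∀ p : Fin 3 → ℝ, q (p - P₁) = 0 → q (p - P₂) = 0 →
      q (p - X) = s * (s - 1) * q (P₂ - P₁) := by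
    intro p h1 h2
    rw [hX1]
    simp only [q, Pi.sub_apply, Pi.add_apply, Pi.smul_apply, smul_eq_mul] at h1 h2 ⊢
    linear_combination (1 - s) * h1 + s * h2
  have lineq34 : ∀ p : Fin 3 → ℝ, q (p - P₃) = 0 → q (p - P₄) = 0 →
      q (p - X) = u * (u - 1) * q (P₄ - P₃) := by
    intro p h1 h2
    rw [hX2]
    simp only [q, Pi.sub_apply, Pi.add_apply, Pi.smul_apply, smul_eq_mul] at h1 h2 ⊢
    linear_combination (1 - u) * h1 + u * h2
  have haX : q (a - X) = s * (s - 1) * q (P₂ - P₁) := lineq12 a ha1 ha2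
  have hcX : q (c - X) = s * (s - 1) * q (P₂ - P₁) := lineq12 c hc1 hc2
  have hdX : q (d - X) = s * (s - 1) * q (P₂ - P₁) := lineq12 d hd1 hd2
  have hbridge : u * (u - 1) * q (P₄ - P₃) = s * (s - 1) * q (P₂ - P₁) := by
    rw [← lineq34 a ha3 ha4]; exact haX
  have heX : q (e - X) = s * (s - 1) * q (P₂ - P₁) := (lineq34 e he3 he4).trans hbridge
  have hfX : q (f - X) = s * (s - 1) * q (P₂ - P₁) := (lineq34 f hf3 hf4).trans hbridge
  -- X is distinct from P₅
  have hX5 : X ≠ P₅ := by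
    intro hXY
    have hμ0 : s * (s - 1) * q (P₂ - P₁) = 0 := by rw [← hcX, hXY]; exact hc5
    have hss : s * (s - 1) = 0 := by
      rcases mul_eq_zero.mp hμ0 with h | h
      · exact h
      · exact absurd h h12
    rcases mul_eq_zero.mp hss with h | h
    · have hXP : X = P₁ := by
        funext i; rw [hX1]
        simp only [Pi.add_apply, Pi.smul_apply, Pi.sub_apply, smul_eq_mul, h]; ring
      exact h15 (by rw [← hXP, hXY])
    · have h' : s = 1 := by linarith
      have hXP : X = P₂ := by
        funext i; rw [hX1]
        simp only [Pi.add_apply, Pi.smul_apply, Pi.sub_apply, smul_eq_mul, h']; ring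
      exact h25 (by rw [← hXP, hXY])
  have hX5c : ¬(-(X 0 - P₅ 0) = 0 ∧ X 1 - P₅ 1 = 0 ∧ X 2 - P₅ 2 = 0) := by
    rintro ⟨h0, h1, h2⟩
    apply hX5
    have e0 : X 0 = P₅ 0 := by linear_combination -h0
    have e1 : X 1 = P₅ 1 := by linear_combination h1
    have e2 : X 2 = P₅ 2 := by linear_combination h2
    exact funext fun i => by fin_cases i <;> assumption
  -- unfold everything to scalars
  simp only [q, Pi.sub_apply] at hc1 hc2 hc5 hc6 hd1 hd2 hd5 hd6 he5 he6 hf5 hcX hdX heX hfX h12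
  by_cases hcol : ((d 1 - c 1)*(e 2 - c 2) - (d 2 - c 2)*(e 1 - c 1) = 0 ∧
      (d 2 - c 2)*(e 0 - c 0) - (d 0 - c 0)*(e 2 - c 2) = 0 ∧
      (d 0 - c 0)*(e 1 - c 1) - (d 1 - c 1)*(e 0 - c 0) = 0)
  · -- degenerate case: c, d, e collinear; contradiction with q (P₂ - P₁) ≠ 0
    exfalso
    obtain ⟨hk0, hk1, hk2⟩ := hcol
    have hune : ¬((d 0 - c 0) = 0 ∧ (d 1 - c 1) = 0 ∧ (d 2 - c 2) = 0) := by
      rintro ⟨h0, h1, h2⟩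
      apply hcd
      have e0 : c 0 = d 0 := by linear_combination -h0
      have e1 : c 1 = d 1 := by linear_combination -h1
      have e2 : c 2 = d 2 := by linear_combination -h2
      exact funext fun i => by fin_cases i <;> assumption
    obtain ⟨t, ht0, ht1, ht2⟩ := par3 (e 0 - c 0) (e 1 - c 1) (e 2 - c 2)
      (d 0 - c 0) (d 1 - c 1) (d 2 - c 2)
      (by linear_combination -hk2) (by linear_combination hk1) (by linear_combination -hk0)
      hune
    have htne0 : t ≠ 0 := by
      intro h
      rw [h] at ht0 ht1 ht2
      apply hce
      have e0 : c 0 = e 0 := by linear_combination -ht0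
      have e1 : c 1 = e 1 := by linear_combination -ht1
      have e2 : c 2 = e 2 := by linear_combination -ht2
      exact funext fun i => by fin_cases i <;> assumption
    have htne1 : t ≠ 1 := by
      intro h
      rw [h] at ht0 ht1 ht2
      apply hde
      have e0 : d 0 = e 0 := by linear_combination -ht0
      have e1 : d 1 = e 1 := by linear_combination -ht1
      have e2 : d 2 = e 2 := by linear_combination -ht2
      exact funext fun i => by fin_cases i <;> assumption
    -- d - c is a null vector
    have hβ : -(d 0 - c 0)^2 + (d 1 - c 1)^2 + (d 2 - c 2)^2 = 0 := by
      have hquad : t*(1-t)*(-(d 0 - c 0)^2 + (d 1 - c 1)^2 + (d 2 - c 2)^2) = 0 := by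
        linear_combination t*hd5 + (1-t)*hc5 - he5 +
          (-(e 0 - P₅ 0) - (c 0 - P₅ 0) - t*(d 0 - c 0))*ht0 +
          ((e 1 - P₅ 1) + (c 1 - P₅ 1) + t*(d 1 - c 1))*ht1 +
          ((e 2 - P₅ 2) + (c 2 - P₅ 2) + t*(d 2 - c 2))*ht2
      rcases mul_eq_zero.mp hquad with h | h
      · rcases mul_eq_zero.mp h with h' | h'
        · exact absurd h' htne0
        · exact absurd (by linear_combination -h' : t = 1) htne1
      · exact h
    have hα1 : -((d 0 - c 0)*(c 0 - P₁ 0)) + (d 1 - c 1)*(c 1 - P₁ 1)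
        + (d 2 - c 2)*(c 2 - P₁ 2) = 0 := by
      linear_combination (hd1 - hc1 - hβ)/2
    have hα2 : -((d 0 - c 0)*(c 0 - P₂ 0)) + (d 1 - c 1)*(c 1 - P₂ 1)
        + (d 2 - c 2)*(c 2 - P₂ 2) = 0 := by
      linear_combination (hd2 - hc2 - hβ)/2
    obtain ⟨ρ₁, hρ10, hρ11, hρ12⟩ := nullperp (d 0 - c 0) (d 1 - c 1) (d 2 - c 2)
      (c 0 - P₁ 0) (c 1 - P₁ 1) (c 2 - P₁ 2) hβ hc1 hα1 hune
    obtain ⟨ρ₂, hρ20, hρ21, hρ22⟩ := nullperp (d 0 - c 0) (d 1 - c 1) (d 2 - c 2)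
      (c 0 - P₂ 0) (c 1 - P₂ 1) (c 2 - P₂ 2) hβ hc2 hα2 hune
    apply h12
    have hP0 : P₂ 0 - P₁ 0 = (ρ₁ - ρ₂)*(d 0 - c 0) := by linear_combination hρ10 - hρ20
    have hP1 : P₂ 1 - P₁ 1 = (ρ₁ - ρ₂)*(d 1 - c 1) := by linear_combination hρ11 - hρ21
    have hP2 : P₂ 2 - P₁ 2 = (ρ₁ - ρ₂)*(d 2 - c 2) := by linear_combination hρ12 - hρ22
    linear_combination (-(P₂ 0 - P₁ 0) - (ρ₁ - ρ₂)*(d 0 - c 0))*hP0 +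
      ((P₂ 1 - P₁ 1) + (ρ₁ - ρ₂)*(d 1 - c 1))*hP1 +
      ((P₂ 2 - P₁ 2) + (ρ₁ - ρ₂)*(d 2 - c 2))*hP2 + (ρ₁ - ρ₂)^2*hβ
  · -- main case: c, d, e affinely independent
    have hu5 : (d 0 - c 0) * -(X 0 - P₅ 0) + (d 1 - c 1) * (X 1 - P₅ 1)
        + (d 2 - c 2) * (X 2 - P₅ 2) = 0 := by
      linear_combination (hd5 - hdX - hc5 + hcX)/2
    have hw5 : (e 0 - c 0) * -(X 0 - P₅ 0) + (e 1 - c 1) * (X 1 - P₅ 1)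
        + (e 2 - c 2) * (X 2 - P₅ 2) = 0 := by
      linear_combination (he5 - heX - hc5 + hcX)/2
    have hz5 : (f 0 - c 0) * -(X 0 - P₅ 0) + (f 1 - c 1) * (X 1 - P₅ 1)
        + (f 2 - c 2) * (X 2 - P₅ 2) = 0 := by
      linear_combination (hf5 - hfX - hc5 + hcX)/2
    have hu6 : (d 0 - c 0) * -(X 0 - P₆ 0) + (d 1 - c 1) * (X 1 - P₆ 1)
        + (d 2 - c 2) * (X 2 - P₆ 2) = 0 := by
      linear_combination (hd6 - hdX - hc6 + hcX)/2
    have hw6 : (e 0 - c 0) * -(X 0 - P₆ 0) + (e 1 - c 1) * (X 1 - P₆ 1)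
        + (e 2 - c 2) * (X 2 - P₆ 2) = 0 := by
      linear_combination (he6 - heX - hc6 + hcX)/2
    have hz6 := keyA (d 0 - c 0) (d 1 - c 1) (d 2 - c 2)
      (e 0 - c 0) (e 1 - c 1) (e 2 - c 2)
      (f 0 - c 0) (f 1 - c 1) (f 2 - c 2)
      (-(X 0 - P₅ 0)) (X 1 - P₅ 1) (X 2 - P₅ 2)
      (-(X 0 - P₆ 0)) (X 1 - P₆ 1) (X 2 - P₆ 2)
      hu5 hw5 hz5 hu6 hw6 hX5c hcol
    simp only [q, Pi.sub_apply]
    linear_combination hfX - heX + he6 + 2*hz6 - 2*hw6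
end
end

section
/- Equal nonzero squares in Case D: Let X, P₁, P₂, P₃, P₄, a, b, c, d, e, f ∈ V and λ, μ ∈ ℝ with λ ∉ {0, 1}, μ ∉ {0, 1}, P₂ − X = λ • (P₁ − X), P₄ − X = μ • (P₃ − X), q(P₁ − X) ≠ 0 and q(P₃ − X) ≠ 0. Suppose each of a, b, c, d is lightlike related to both P₁ and P₂, and each of a, b, e, f is lightlike related to both P₃ and P₄. Then q(a − X) = q(b − X) = q(c − X) = q(d − X) = q(e − X) = q(f − X) = λ · q(P₁ − X), and this common value is nonzero. -/
noncomputable section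

lemma key (u v : Fin 3 → ℝ) (l : ℝ) (hl : l ≠ 1)
    (h1 : q (u - v) = 0) (h2 : q (u - l • v) = 0) : q u = l * q v := by
  have h0 : (l - 1) * (q u - l * q v) = 0 := by
    simp only [q, Pi.sub_apply, Pi.smul_apply, smul_eq_mul] at h1 h2 ⊢
    linear_combination l * h1 - h2
  rcases mul_eq_zero.mp h0 with h | h
  · exact absurd (by linarith [sub_eq_zero.mp h] : l = 1) hl
  · linarith [sub_eq_zero.mp h]

lemma key' (Y X P₁ P₂ : Fin 3 → ℝ) (l : ℝ) (hl : l ≠ 1)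
    (h2 : P₂ - X = l • (P₁ - X))
    (hq1 : q (Y - P₁) = 0) (hq2 : q (Y - P₂) = 0) :
    q (Y - X) = l * q (P₁ - X) := by
  apply key _ _ _ hl
  · rw [sub_sub_sub_cancel_right]; exact hq1
  · rw [← h2, sub_sub_sub_cancel_right]; exact hq2

/-- Equal nonzero squares in Case D. -/
theorem equal_nonzero_squares
    (X P₁ P₂ P₃ P₄ a b c d e f : Fin 3 → ℝ) (l μ : ℝ)
    (hl0 : l ≠ 0) (hl1 : l ≠ 1) (hμ0 : μ ≠ 0) (hμ1 : μ ≠ 1)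
    (h2 : P₂ - X = l • (P₁ - X)) (h4 : P₄ - X = μ • (P₃ - X))
    (hq1 : q (P₁ - X) ≠ 0) (hq3 : q (P₃ - X) ≠ 0)
    (ha1 : q (a - P₁) = 0) (ha2 : q (a - P₂) = 0)
    (hb1 : q (b - P₁) = 0) (hb2 : q (b - P₂) = 0)
    (hc1 : q (c - P₁) = 0) (hc2 : q (c - P₂) = 0)
    (hd1 : q (d - P₁) = 0) (hd2 : q (d - P₂) = 0)
    (ha3 : q (a - P₃) = 0) (ha4 : q (a - P₄) = 0)
    (hb3 : q (b - P₃) = 0) (hb4 : q (b - P₄) = 0)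
    (he3 : q (e - P₃) = 0) (he4 : q (e - P₄) = 0)
    (hf3 : q (f - P₃) = 0) (hf4 : q (f - P₄) = 0) :
    q (a - X) = l * q (P₁ - X) ∧ q (b - X) = l * q (P₁ - X) ∧
    q (c - X) = l * q (P₁ - X) ∧ q (d - X) = l * q (P₁ - X) ∧
    q (e - X) = l * q (P₁ - X) ∧ q (f - X) = l * q (P₁ - X) ∧
    l * q (P₁ - X) ≠ 0 := by
  have Ha := key' a X P₁ P₂ l hl1 h2 ha1 ha2
  have Hb := key' b X P₁ P₂ l hl1 h2 hb1 hb2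
  have Hc := key' c X P₁ P₂ l hl1 h2 hc1 hc2
  have Hd := key' d X P₁ P₂ l hl1 h2 hd1 hd2
  have Ha' := key' a X P₃ P₄ μ hμ1 h4 ha3 ha4
  have He' := key' e X P₃ P₄ μ hμ1 h4 he3 he4
  have Hf' := key' f X P₃ P₄ μ hμ1 h4 hf3 hf4
  have hmu : μ * q (P₃ - X) = l * q (P₁ - X) := by rw [← Ha', Ha]
  exact ⟨Ha, Hb, Hc, Hd, He'.trans hmu, Hf'.trans hmu, mul_ne_zero hl0 hq1⟩
end
end
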